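/- arXiv:math/0607663 — 4 statements merged into one kernel-verified Lean document; each statement's English description precedes it below -/
import Mathlib

section
/- Let W(E) and φ : W(E) → (ZMod 2)^n be as in the context, and assume additionally that E i j holds for all distinct i, j ∈ {1,…,n}. Then the kernel of φ is an abelian group if and only if one of the following two conditions holds: (i) E i j holds for all distinct i, j ∈ {1,…,d}; or (ii) every non-adjacent pair {i,j} (i.e. i ≠ j with ¬E i j) contains exactly one element of {1,…,n}, every vertex j ∈ {1,…,d} is non-adjacent to at most one other vertex, and for every non-adjacent pair {i,j} with i ≤ n < j one has a_{j,i} = 1 and a_{k,i} = 0 for every k with n < k ≤ d and k ≠ j. -/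
/-- Relators of the right-angled Coxeter group of the graph `E`:
`s j ^ 2` for every vertex `j`, and `(s i * s j) ^ 2` for every edge `{i, j}` of `E`. -/
def racgRels {d : ℕ} (E : Fin d → Fin d → Prop) : Set (FreeGroup (Fin d)) :=
  {r | (∃ j : Fin d, r = FreeGroup.of j ^ 2) ∨
    ∃ i j : Fin d, E i j ∧ r = (FreeGroup.of i * FreeGroup.of j) ^ 2}

/-- The right-angled Coxeter group `W(E)` of the graph `E`. -/
abbrev RACG {d : ℕ} (E : Fin d → Fin d → Prop) : Type := PresentedGroup (racgRels E)

/-- The standard generator `s j` of the right-angled Coxeter group `W(E)`. -/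
def racgGen {d : ℕ} (E : Fin d → Fin d → Prop) (j : Fin d) : RACG E :=
  PresentedGroup.of j

/-! Call a vertex `t` low if `t < n` and high otherwise. The low generators pairwise commute, so
`e_m ↦ s_m` defines a homomorphism `σ : (ZMod 2)^n → W` with `φ ∘ σ = id`; hence
`x * σ (φ x) ∈ ker φ` for every `x`.

Under (ii) the non-edges form a matching between low and high vertices. The generators adjacent to
all others, together with the products `s_i s_j` over non-edges `i < n ≤ j`, pairwise commute and
generate a normal subgroup `H`. Modulo `H` each generator `s_t` agrees with `σ (φ s_t)`, so
`W → W ⧸ H` factors through `φ` and `ker φ ≤ H` is abelian. Condition (i) implies (ii)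
vacuously.

Conversely, a path `i, j, k` in the complement of `E` gives `W → S₄` sending `s_i, s_j, s_k` to
`(0 1), (1 2), (2 3)` and the other generators to `1`. For `k ≠ i` the images of the kernel
elements `(s_i s_j)²` and `(s_k s_j)²` do not commute, so no vertex has two non-neighbours. For
`k = i` the image of `(s_i s_j)²` is a 3-cycle, so no kernel element maps to a transposition;
applied to `x * σ (φ x)` for `x = s_i, s_j, s_i s_k` this yields the remaining conditions of (ii).
-/

open Multiplicative

section RACG

variable {d : ℕ} {E : Fin d → Fin d → Prop}

lemma racgGen_mul_self (t : Fin d) : racgGen E t * racgGen E t = 1 := by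
  simpa [pow_two, racgGen, PresentedGroup.of] using
    PresentedGroup.one_of_mem (rels := racgRels E) (Or.inl ⟨t, rfl⟩)

lemma racgGen_inv (t : Fin d) : (racgGen E t)⁻¹ = racgGen E t :=
  inv_eq_of_mul_eq_one_right (racgGen_mul_self t)

lemma commute_racgGen {u v : Fin d} (h : E u v) : Commute (racgGen E u) (racgGen E v) := by
  have hrel : (racgGen E u * racgGen E v) * (racgGen E u * racgGen E v) = 1 := by
    simpa [pow_two, racgGen, PresentedGroup.of] using
      PresentedGroup.one_of_mem (rels := racgRels E) (Or.inr ⟨u, v, h, rfl⟩)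
  have := (inv_eq_of_mul_eq_one_right hrel).symm
  rwa [mul_inv_rev, racgGen_inv, racgGen_inv] at this

lemma closure_range_racgGen : Subgroup.closure (Set.range (racgGen E)) = ⊤ :=
  PresentedGroup.closure_range_of _

variable {G : Type*} [Group G]

lemma RACG.hom_ext {f g : RACG E →* G} (h : ∀ t, f (racgGen E t) = g (racgGen E t)) : f = g :=
  PresentedGroup.ext h

def racgLift (f : Fin d → G) (hsq : ∀ t, f t * f t = 1)
    (hcomm : ∀ u v, E u v → Commute (f u) (f v)) : RACG E →* G :=
  PresentedGroup.toGroup (f := f) <| by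
    rintro r (⟨t, rfl⟩ | ⟨u, v, huv, rfl⟩)
    · simp [pow_two, hsq]
    · simp [pow_two, mul_assoc, ← mul_assoc (f v), (hcomm u v huv).eq, hsq]

@[simp]
lemma racgLift_racgGen (f : Fin d → G) (hsq : ∀ t, f t * f t = 1)
    (hcomm : ∀ u v, E u v → Commute (f u) (f v)) (t : Fin d) :
    racgLift f hsq hcomm (racgGen E t) = f t :=
  PresentedGroup.toGroup.of _

end RACG

section ZModTwo

lemma zmodTwo_eq_zero_or_one (x : ZMod 2) : x = 0 ∨ x = 1 := by
  revert x
  decide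

lemma zmodTwo_add_self {ι : Type*} (v : ι → ZMod 2) : v + v = 0 :=
  funext fun m ↦ CharTwo.add_self_eq_zero (v m)

lemma zmodTwo_mul_self {ι : Type*} (x : Multiplicative (ι → ZMod 2)) : x * x = 1 :=
  zmodTwo_add_self (toAdd x)

lemma sq_mem_ker_of_zmodTwo {G ι : Type*} [Group G] {φ : G →* Multiplicative (ι → ZMod 2)}
    (x : G) : x ^ 2 ∈ φ.ker := by
  rw [MonoidHom.mem_ker, map_pow, pow_two, zmodTwo_mul_self]

variable {ι : Type*} [Fintype ι] [DecidableEq ι] {G : Type*} [Group G]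

lemma ofAdd_mem_closure_single (v : ι → ZMod 2) :
    ofAdd v ∈ Subgroup.closure ((fun m ↦ ofAdd (Pi.single m 1)) '' {m | v m ≠ 0}) := by
  rw [← Finset.univ_sum_single v, ofAdd_sum]
  refine Subgroup.prod_mem _ fun m _ ↦ ?_
  rcases zmodTwo_eq_zero_or_one (v m) with hm | hm
  · simp [hm]
  · exact Subgroup.subset_closure ⟨m, by simp [hm], by simp [hm]⟩

lemma MonoidHom.ext_ofAdd_single {M : Type*} [Monoid M]
    {f g : Multiplicative (ι → ZMod 2) →* M}
    (h : ∀ m, f (ofAdd (Pi.single m 1)) = g (ofAdd (Pi.single m 1))) : f = g := by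
  refine MonoidHom.eq_of_eqOn_dense (s := Set.range fun m ↦ ofAdd (Pi.single m 1)) ?_ ?_
  · refine eq_top_iff.2 fun v _ ↦ Subgroup.closure_mono ?_ (ofAdd_mem_closure_single (toAdd v))
    exact Set.image_subset_range _ _
  · rintro _ ⟨m, rfl⟩
    exact h m

def zmodTwoHom (g : G) (hg : g * g = 1) : Multiplicative (ZMod 2) →* G where
  toFun x := g ^ (toAdd x).val
  map_one' := pow_zero g
  map_mul' x y := by
    rcases zmodTwo_eq_zero_or_one (toAdd x) with hx | hx <;>
    rcases zmodTwo_eq_zero_or_one (toAdd y) with hy | hy <;>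
    simp [hx, hy, hg, CharTwo.add_self_eq_zero, show ZMod.val (1 : ZMod 2) = 1 from rfl]

lemma zmodTwoHom_ofAdd_one (g : G) (hg : g * g = 1) : zmodTwoHom g hg (ofAdd 1) = g :=
  pow_one g

lemma Commute.zmodTwoHom {g g' : G} (h : Commute g g') (hg : g * g = 1) (hg' : g' * g' = 1)
    (x y : Multiplicative (ZMod 2)) : Commute (zmodTwoHom g hg x) (zmodTwoHom g' hg' y) :=
  h.pow_pow _ _

def zmodTwoPiLift (g : ι → G) (hsq : ∀ m, g m * g m = 1)
    (hcomm : Pairwise fun m m' ↦ Commute (g m) (g m')) :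
    Multiplicative (ι → ZMod 2) →* G :=
  (MonoidHom.noncommPiCoprod (fun m ↦ zmodTwoHom (g m) (hsq m))
    fun _ _ h ↦ (hcomm h).zmodTwoHom _ _).comp
      (MulEquiv.funMultiplicative ι (ZMod 2)).toMonoidHom

@[simp]
lemma zmodTwoPiLift_single (g : ι → G) (hsq : ∀ m, g m * g m = 1)
    (hcomm : Pairwise fun m m' ↦ Commute (g m) (g m')) (m : ι) :
    zmodTwoPiLift g hsq hcomm (ofAdd (Pi.single m 1)) = g m := by
  have : MulEquiv.funMultiplicative ι (ZMod 2) (ofAdd (Pi.single m 1)) =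
      Pi.mulSingle m (ofAdd 1) := by
    funext m'
    by_cases h : m' = m <;> simp [h]
  rw [zmodTwoPiLift, MonoidHom.comp_apply, MulEquiv.coe_toMonoidHom, this]
  exact (MonoidHom.noncommPiCoprod_mulSingle _ _ _).trans (zmodTwoHom_ofAdd_one _ _)

end ZModTwo

section LowSection

variable {d n : ℕ} {E : Fin d → Fin d → Prop} (hnd : n ≤ d)
  (hEn : ∀ i j : Fin d, i.val < n → j.val < n → i ≠ j → E i j)

def lowSection : Multiplicative (Fin n → ZMod 2) →* RACG E :=
  zmodTwoPiLift (fun m ↦ racgGen E (Fin.castLE hnd m)) (fun _ ↦ racgGen_mul_self _)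
    fun _ _ h ↦ commute_racgGen (hEn _ _ (by simp) (by simp) ((Fin.castLE_injective hnd).ne h))

@[simp]
lemma lowSection_single (m : Fin n) :
    lowSection hnd hEn (ofAdd (Pi.single m 1)) = racgGen E (Fin.castLE hnd m) :=
  zmodTwoPiLift_single _ _ _ m

lemma lowSection_mem {K : Subgroup (RACG E)} {v : Fin n → ZMod 2}
    (hv : ∀ m, v m ≠ 0 → racgGen E (Fin.castLE hnd m) ∈ K) :
    lowSection hnd hEn (ofAdd v) ∈ K := by
  refine (Subgroup.closure_le (K.comap (lowSection hnd hEn))).2 ?_ (ofAdd_mem_closure_single v)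
  rintro _ ⟨m, hm, rfl⟩
  simpa using hv m hm

variable {a : Fin d → Fin n → ZMod 2}
  (ha : ∀ (i : Fin d) (h : i.val < n), a i = Pi.single (⟨i.val, h⟩ : Fin n) 1)
  {φ : RACG E →* Multiplicative (Fin n → ZMod 2)}
  (hφ : ∀ j : Fin d, φ (racgGen E j) = ofAdd (a j))

include ha hφ in
lemma map_lowSection (v : Multiplicative (Fin n → ZMod 2)) : φ (lowSection hnd hEn v) = v := by
  refine DFunLike.congr_fun (MonoidHom.ext_ofAdd_single (f := φ.comp (lowSection hnd hEn))
    (g := MonoidHom.id _) fun m ↦ ?_) v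
  simp [hφ, ha _ (show (Fin.castLE hnd m).val < n by simp)]

include ha hφ in
lemma mul_lowSection_mem_ker (x : RACG E) : x * lowSection hnd hEn (φ x) ∈ φ.ker := by
  rw [MonoidHom.mem_ker, map_mul, map_lowSection hnd hEn ha hφ, zmodTwo_mul_self]

end LowSection

lemma Subgroup.normal_closure_of_conj_mem {G : Type*} [Group G] {R S : Set G}
    (hR : Subgroup.closure R = ⊤) (hR_inv : ∀ r ∈ R, r⁻¹ ∈ R)
    (hS : ∀ r ∈ R, ∀ s ∈ S, r * s * r⁻¹ ∈ Subgroup.closure S) :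
    (Subgroup.closure S).Normal := by
  have hconj : ∀ r ∈ R, ∀ x ∈ Subgroup.closure S,
      r * x * r⁻¹ ∈ Subgroup.closure S := by
    intro r hr x hx
    induction hx using Subgroup.closure_induction with
    | mem s hs => exact hS r hr s hs
    | one => simp
    | mul x y _ _ hx hy => simpa [mul_assoc] using mul_mem hx hy
    | inv x _ hx => simpa [mul_assoc] using inv_mem hx
  rw [← Subgroup.normalizer_eq_top_iff, eq_top_iff, ← hR, Subgroup.closure_le]
  refine fun r hr ↦ Subgroup.mem_normalizer_iff.2 fun x ↦ ⟨hconj r hr x, fun hx ↦ ?_⟩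
  simpa [mul_assoc] using hconj r⁻¹ (hR_inv r hr) _ hx

section Sufficiency

variable {d n : ℕ} {E : Fin d → Fin d → Prop}

def IsUniversal (E : Fin d → Fin d → Prop) (u : Fin d) : Prop := ∀ v, v ≠ u → E u v

lemma IsUniversal.commute_racgGen {u : Fin d} (hu : IsUniversal E u) (t : Fin d) :
    Commute (racgGen E u) (racgGen E t) := by
  rcases eq_or_ne t u with rfl | h
  · exact Commute.refl _
  · exact _root_.commute_racgGen (hu t h)

variable (n) in
def matchingSet (E : Fin d → Fin d → Prop) : Set (RACG E) :=
  {x | (∃ u, IsUniversal E u ∧ x = racgGen E u) ∨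
    ∃ i j, i.val < n ∧ n ≤ j.val ∧ ¬ E i j ∧ x = racgGen E i * racgGen E j}

variable (hsymm : ∀ i j, E i j → E j i)
  (hmatch : ∀ j i k : Fin d, i ≠ j → k ≠ j → ¬ E i j → ¬ E k j → i = k)

include hsymm hmatch in
lemma adj_of_not_adj {p q r : Fin d} (hpq : p ≠ q) (hnpq : ¬ E p q) (hrp : r ≠ p)
    (hrq : r ≠ q) : E r p := by
  by_contra h
  exact hrq (hmatch p q r hpq.symm hrp (fun h' ↦ hnpq (hsymm _ _ h')) h).symm

include hsymm hmatch in
lemma commute_racgGen_mul_of_not_adj {i j t : Fin d} (hij : i ≠ j) (hnij : ¬ E i j)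
    (hti : t ≠ i) (htj : t ≠ j) : Commute (racgGen E t) (racgGen E i * racgGen E j) :=
  (commute_racgGen (adj_of_not_adj hsymm hmatch hij hnij hti htj)).mul_right
    (commute_racgGen (adj_of_not_adj hsymm hmatch hij.symm (fun h ↦ hnij (hsymm _ _ h)) htj hti))

include hsymm hmatch in
lemma pairwise_commute_matchingSet :
    ∀ x ∈ matchingSet n E, ∀ y ∈ matchingSet n E, Commute x y := by
  have hcomm_univ :
      ∀ u, IsUniversal E u → ∀ y ∈ matchingSet n E, Commute (racgGen E u) y := by
    rintro u hu y (⟨v, -, rfl⟩ | ⟨i, j, -, -, -, rfl⟩)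
    · exact hu.commute_racgGen v
    · exact (hu.commute_racgGen i).mul_right (hu.commute_racgGen j)
  rintro x (⟨u, hu, rfl⟩ | ⟨i, j, hi, hj, hnij, rfl⟩) y hy
  · exact hcomm_univ u hu y hy
  rcases hy with ⟨u, hu, rfl⟩ | ⟨i', j', hi', hj', hnij', rfl⟩
  · exact (hcomm_univ u hu _ (Or.inr ⟨i, j, hi, hj, hnij, rfl⟩)).symm
  have hij : i ≠ j := Fin.ne_of_val_ne (by omega)
  have hij' : i' ≠ j' := Fin.ne_of_val_ne (by omega)
  rcases eq_or_ne i' i with rfl | hii'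
  · obtain rfl := hmatch i' j j' hij.symm hij'.symm (fun h ↦ hnij (hsymm _ _ h))
      (fun h ↦ hnij' (hsymm _ _ h))
    exact Commute.refl _
  have hjj' : j' ≠ j := fun h ↦ hii' (hmatch j i' i (h ▸ hij') hij (h ▸ hnij') hnij)
  refine ((commute_racgGen_mul_of_not_adj hsymm hmatch hij hnij hii' ?_).mul_left
    (commute_racgGen_mul_of_not_adj hsymm hmatch hij hnij ?_ hjj')).symm
  · exact Fin.ne_of_val_ne (by omega)
  · exact Fin.ne_of_val_ne (by omega)

include hsymm hmatch in
lemma conj_mem_closure_matchingSet (t : Fin d) {x : RACG E} (hx : x ∈ matchingSet n E) :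
    racgGen E t * x * (racgGen E t)⁻¹ ∈ Subgroup.closure (matchingSet n E) := by
  rcases hx with ⟨u, hu, rfl⟩ | ⟨i, j, hi, hj, hnij, rfl⟩
  · rw [(hu.commute_racgGen t).symm.mul_inv_cancel]
    exact Subgroup.subset_closure (Or.inl ⟨u, hu, rfl⟩)
  have hmem : racgGen E i * racgGen E j ∈ Subgroup.closure (matchingSet n E) :=
    Subgroup.subset_closure (Or.inr ⟨i, j, hi, hj, hnij, rfl⟩)
  by_cases ht : t = i ∨ t = j
  · convert inv_mem hmem using 1
    rcases ht with rfl | rfl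
    · simp [← mul_assoc, racgGen_mul_self, racgGen_inv]
    · simp [mul_assoc, racgGen_mul_self, racgGen_inv]
  · rw [not_or] at ht
    have hij : i ≠ j := Fin.ne_of_val_ne (by omega)
    rwa [(commute_racgGen_mul_of_not_adj hsymm hmatch hij hnij ht.1 ht.2).mul_inv_cancel]

include hsymm hmatch in
lemma normal_closure_matchingSet : (Subgroup.closure (matchingSet n E)).Normal :=
  Subgroup.normal_closure_of_conj_mem closure_range_racgGen
    (by rintro _ ⟨t, rfl⟩; exact ⟨t, (racgGen_inv t).symm⟩)
    (by rintro _ ⟨t, rfl⟩ x hx; exact conj_mem_closure_matchingSet hsymm hmatch t hx)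

variable (hnd : n ≤ d) (hEn : ∀ i j : Fin d, i.val < n → j.val < n → i ≠ j → E i j)
  {a : Fin d → Fin n → ZMod 2}
  (ha : ∀ (i : Fin d) (h : i.val < n), a i = Pi.single (⟨i.val, h⟩ : Fin n) 1)
  {φ : RACG E →* Multiplicative (Fin n → ZMod 2)}
  (hφ : ∀ j : Fin d, φ (racgGen E j) = ofAdd (a j))
  (hlowHigh : ∀ i j : Fin d, i ≠ j → ¬ E i j → (i.val < n ↔ ¬ j.val < n))
  (hpartner : ∀ (i j : Fin d) (hi : i.val < n), n ≤ j.val → ¬ E i j →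
    a j ⟨i.val, hi⟩ = 1 ∧ ∀ k : Fin d, n ≤ k.val → k ≠ j → a k ⟨i.val, hi⟩ = 0)

include hlowHigh hpartner in
lemma isUniversal_or_not_adj_of_ne_zero {t : Fin d} (ht : n ≤ t.val) {m : Fin n}
    (hm : a t m ≠ 0) : IsUniversal E (Fin.castLE hnd m) ∨ ¬ E (Fin.castLE hnd m) t := by
  refine or_iff_not_imp_left.2 fun hu ↦ ?_
  obtain ⟨w, hw, hnw⟩ : ∃ w, w ≠ Fin.castLE hnd m ∧ ¬ E (Fin.castLE hnd m) w := by
    simpa [IsUniversal] using hu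
  have hlow : (Fin.castLE hnd m).val < n := by simp
  have hw_high : n ≤ w.val := not_lt.1 ((hlowHigh _ _ hw.symm hnw).1 hlow)
  obtain rfl : t = w := by
    by_contra htw
    exact hm (by simpa using (hpartner _ w hlow hw_high hnw).2 t ht htw)
  exact hnw

include hlowHigh hpartner in
lemma lowSection_mem_closure_matchingSet {t : Fin d} (ht : n ≤ t.val) {v : Fin n → ZMod 2}
    (hv : ∀ m, v m ≠ 0 → a t m ≠ 0 ∧ E (Fin.castLE hnd m) t) :
    lowSection hnd hEn (ofAdd v) ∈ Subgroup.closure (matchingSet n E) := by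
  refine lowSection_mem hnd hEn fun m hm ↦ Subgroup.subset_closure (Or.inl ⟨_, ?_, rfl⟩)
  obtain ⟨hatm, hadj⟩ := hv m hm
  exact (isUniversal_or_not_adj_of_ne_zero hnd hlowHigh hpartner ht hatm).resolve_right
    (not_not.2 hadj)

include hmatch hlowHigh hpartner in
lemma racgGen_mul_lowSection_mem_closure_of_not_adj {t w : Fin d} (ht : n ≤ t.val)
    (hw : w.val < n) (hnwt : ¬ E w t) :
    racgGen E t * lowSection hnd hEn (ofAdd (a t)) ∈ Subgroup.closure (matchingSet n E) := by
  have hsplit : ofAdd (a t) = ofAdd (Pi.single ⟨w.val, hw⟩ 1) *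
      ofAdd (Pi.single ⟨w.val, hw⟩ 1 + a t) := by
    rw [← ofAdd_add, ← add_assoc, zmodTwo_add_self, zero_add]
  rw [hsplit, map_mul, lowSection_single, show Fin.castLE hnd ⟨w.val, hw⟩ = w from rfl,
    ← mul_assoc]
  refine mul_mem ?_ (lowSection_mem_closure_matchingSet hnd hEn hlowHigh hpartner ht
    fun m hm ↦ ?_)
  · have : racgGen E w * racgGen E t ∈ Subgroup.closure (matchingSet n E) :=
      Subgroup.subset_closure (Or.inr ⟨w, t, hw, ht, hnwt, rfl⟩)
    simpa [racgGen_inv] using inv_mem this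
  rcases eq_or_ne m ⟨w.val, hw⟩ with rfl | hmw
  · simp [(hpartner w t hw ht hnwt).1, CharTwo.add_self_eq_zero] at hm
  refine ⟨by simpa [Pi.single_apply, hmw] using hm, by_contra fun h ↦ hmw (Fin.ext ?_)⟩
  have hne : Fin.castLE hnd m ≠ t := Fin.ne_of_val_ne (by simp; omega)
  have hwt : w ≠ t := Fin.ne_of_val_ne (by omega)
  simpa using congrArg Fin.val (hmatch t _ w hne hwt h hnwt)

include ha hφ hsymm hmatch hlowHigh hpartner in
lemma racgGen_mul_lowSection_mem_closure (t : Fin d) :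
    racgGen E t * lowSection hnd hEn (φ (racgGen E t)) ∈ Subgroup.closure (matchingSet n E) := by
  rw [hφ]
  rcases lt_or_ge t.val n with ht | ht
  · simp [ha t ht, show Fin.castLE hnd ⟨t.val, ht⟩ = t from rfl, racgGen_mul_self]
  by_cases hu : IsUniversal E t
  · refine mul_mem (Subgroup.subset_closure (Or.inl ⟨t, hu, rfl⟩))
      (lowSection_mem_closure_matchingSet hnd hEn hlowHigh hpartner ht fun m hm ↦
        ⟨hm, hsymm _ _ (hu _ (Fin.ne_of_val_ne (by simp; omega)))⟩)
  obtain ⟨w, hwt, hnw⟩ : ∃ w, w ≠ t ∧ ¬ E t w := by simpa [IsUniversal] using hu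
  have hw : w.val < n := not_not.1 ((hlowHigh t w hwt.symm hnw).not.1 (by omega))
  exact racgGen_mul_lowSection_mem_closure_of_not_adj hmatch hnd hEn hlowHigh hpartner ht hw
    fun h ↦ hnw (hsymm _ _ h)

include hnd hEn ha hφ hsymm hlowHigh hmatch hpartner in
lemma ker_le_closure_matchingSet : φ.ker ≤ Subgroup.closure (matchingSet n E) := by
  have := normal_closure_matchingSet (n := n) hsymm hmatch
  set π := QuotientGroup.mk' (Subgroup.closure (matchingSet n E))
  have hπ : π.comp ((lowSection hnd hEn).comp φ) = π := RACG.hom_ext fun t ↦ by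
    have ht := racgGen_mul_lowSection_mem_closure hsymm hmatch hnd hEn ha hφ hlowHigh hpartner t
    rw [← QuotientGroup.ker_mk' (Subgroup.closure (matchingSet n E)), MonoidHom.mem_ker,
      map_mul] at ht
    rw [MonoidHom.comp_apply, MonoidHom.comp_apply, eq_inv_of_mul_eq_one_right ht, ← map_inv,
      racgGen_inv]
  intro x hx
  have := DFunLike.congr_fun hπ x
  rwa [MonoidHom.comp_apply, MonoidHom.comp_apply, MonoidHom.mem_ker.1 hx, map_one, map_one,
    eq_comm, QuotientGroup.mk'_apply, QuotientGroup.eq_one_iff] at this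

include hnd hEn ha hφ hsymm hlowHigh hmatch hpartner in
theorem ker_abelian_of_matching {x y : RACG E} (hx : x ∈ φ.ker) (hy : y ∈ φ.ker) :
    x * y = y * x := by
  have := Subgroup.isMulCommutative_closure (pairwise_commute_matchingSet (n := n) hsymm hmatch)
  have hle := ker_le_closure_matchingSet hsymm hmatch hnd hEn ha hφ hlowHigh hpartner
  exact setLike_mul_comm (hle hx) (hle hy)

end Sufficiency

section Necessity

open Equiv

variable {d n : ℕ} {E : Fin d → Fin d → Prop}

-- A path `i, j, k` in the complement of `E`; `k = i` leaves just the non-edge `{i, j}`.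
def pathPerm (i j k t : Fin d) : Perm (Fin 4) :=
  if t = i then swap 0 1 else if t = j then swap 1 2 else if t = k then swap 2 3 else 1

lemma pathPerm_mul_self (i j k t : Fin d) : pathPerm i j k t * pathPerm i j k t = 1 := by
  unfold pathPerm
  split_ifs <;> decide

lemma pathPerm_commute {i j k : Fin d} (hij : ¬ E i j) (hji : ¬ E j i) (hjk : ¬ E j k)
    (hkj : ¬ E k j) {u v : Fin d} (huv : E u v) :
    Commute (pathPerm i j k u) (pathPerm i j k v) := by
  unfold pathPerm
  split_ifs <;> subst_vars <;>
    first
      | exact Commute.refl _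
      | exact Commute.one_left _
      | exact Commute.one_right _
      | contradiction
      | exact (show _ * _ = _ * _ by decide)

def pathHom {i j k : Fin d} (hij : ¬ E i j) (hji : ¬ E j i) (hjk : ¬ E j k) (hkj : ¬ E k j) :
    RACG E →* Perm (Fin 4) :=
  racgLift (pathPerm i j k) (pathPerm_mul_self i j k) fun _ _ ↦ pathPerm_commute hij hji hjk hkj

@[simp]
lemma pathHom_racgGen {i j k : Fin d} (hij : ¬ E i j) (hji : ¬ E j i) (hjk : ¬ E j k)
    (hkj : ¬ E k j) (t : Fin d) : pathHom hij hji hjk hkj (racgGen E t) = pathPerm i j k t :=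
  racgLift_racgGen _ _ _ t

variable {φ : RACG E →* Multiplicative (Fin n → ZMod 2)}
  (habel : ∀ x y : RACG E, x ∈ φ.ker → y ∈ φ.ker → x * y = y * x)
  (hsymm : ∀ i j, E i j → E j i)

include habel hsymm in
lemma eq_of_not_adj_of_not_adj_of_ker_abelian {i j k : Fin d} (hij : i ≠ j) (hkj : k ≠ j)
    (hnij : ¬ E i j) (hnkj : ¬ E k j) : i = k := by
  by_contra hik
  have h := congrArg
    (pathHom hnij (fun h ↦ hnij (hsymm _ _ h)) (fun h ↦ hnkj (hsymm _ _ h)) hnkj)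
    (habel _ _ (sq_mem_ker_of_zmodTwo (racgGen E i * racgGen E j))
      (sq_mem_ker_of_zmodTwo (racgGen E k * racgGen E j)))
  simp [pathPerm, hij.symm, hkj, Ne.symm hik] at h
  revert h
  decide

include habel in
lemma pathHom_ne_swap_of_ker_abelian {i j : Fin d} (hij : i ≠ j) (hnij : ¬ E i j)
    (hnji : ¬ E j i) {y : RACG E} (hy : y ∈ φ.ker) :
    pathHom hnij hnji hnji hnij y ≠ swap 0 1 ∧ pathHom hnij hnji hnji hnij y ≠ swap 1 2 := by
  have h := congrArg (pathHom hnij hnji hnji hnij)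
    (habel _ _ (sq_mem_ker_of_zmodTwo (racgGen E i * racgGen E j)) hy)
  simp [pathPerm, hij.symm] at h
  constructor <;> rintro h' <;> rw [h'] at h <;> revert h <;> decide

variable (hnd : n ≤ d) (hEn : ∀ i j : Fin d, i.val < n → j.val < n → i ≠ j → E i j)
  {a : Fin d → Fin n → ZMod 2}
  (ha : ∀ (i : Fin d) (h : i.val < n), a i = Pi.single (⟨i.val, h⟩ : Fin n) 1)
  (hφ : ∀ j : Fin d, φ (racgGen E j) = ofAdd (a j))

include habel hEn ha hφ in
lemma pathHom_ne_swap_of_low_support {i j : Fin d} (hij : i ≠ j) (hnij : ¬ E i j)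
    (hnji : ¬ E j i) (hj : n ≤ j.val) (x : RACG E)
    (hx : ∀ m, toAdd (φ x) m ≠ 0 → Fin.castLE hnd m ≠ i) :
    pathHom hnij hnji hnji hnij x ≠ swap 0 1 ∧ pathHom hnij hnji hnji hnij x ≠ swap 1 2 := by
  have hσ : lowSection hnd hEn (φ x) ∈ (pathHom hnij hnji hnji hnij).ker := by
    refine lowSection_mem hnd hEn (v := toAdd (φ x)) fun m hm ↦ ?_
    have hmj : Fin.castLE hnd m ≠ j := Fin.ne_of_val_ne (by simp; omega)
    simp [pathPerm, hx m hm, hmj]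
  simpa [MonoidHom.mem_ker.1 hσ] using
    pathHom_ne_swap_of_ker_abelian habel hij hnij hnji (mul_lowSection_mem_ker hnd hEn ha hφ x)

include habel hsymm hnd hEn ha hφ in
lemma adj_of_high_of_ker_abelian {i j : Fin d} (hij : i ≠ j) (hi : n ≤ i.val)
    (hj : n ≤ j.val) : E i j := by
  by_contra hnij
  refine (pathHom_ne_swap_of_low_support habel hnd hEn ha hφ hij hnij
    (fun h ↦ hnij (hsymm _ _ h)) hj (racgGen E i) fun m _ ↦ Fin.ne_of_val_ne (by simp; omega)).1
    (by simp [pathPerm])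

include habel hsymm hnd hEn ha hφ in
lemma partner_coord_eq_one_of_ker_abelian {i j : Fin d} (hi : i.val < n) (hj : n ≤ j.val)
    (hnij : ¬ E i j) : a j ⟨i.val, hi⟩ = 1 := by
  refine (zmodTwo_eq_zero_or_one _).resolve_left fun h0 ↦ ?_
  have hij : i ≠ j := Fin.ne_of_val_ne (by omega)
  refine (pathHom_ne_swap_of_low_support habel hnd hEn ha hφ hij hnij
    (fun h ↦ hnij (hsymm _ _ h)) hj (racgGen E j) fun m hm hmi ↦ ?_).2
    (by simp [pathPerm, hij.symm])
  subst hmi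
  simp_all

include habel hsymm hnd hEn ha hφ in
lemma other_coord_eq_zero_of_ker_abelian {i j k : Fin d} (hi : i.val < n) (hj : n ≤ j.val)
    (hnij : ¬ E i j) (hk : n ≤ k.val) (hkj : k ≠ j) : a k ⟨i.val, hi⟩ = 0 := by
  refine (zmodTwo_eq_zero_or_one _).resolve_right fun h1 ↦ ?_
  have hij : i ≠ j := Fin.ne_of_val_ne (by omega)
  have hki : k ≠ i := Fin.ne_of_val_ne (by omega)
  refine (pathHom_ne_swap_of_low_support habel hnd hEn ha hφ hij hnij
    (fun h ↦ hnij (hsymm _ _ h)) hj (racgGen E i * racgGen E k) fun m hm hmi ↦ ?_).1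
    (by simp [pathPerm, hki, hkj])
  subst hmi
  simp only [Fin.val_castLE, Fin.eta] at h1
  simp [hφ, ha _ hi, h1, CharTwo.add_self_eq_zero] at hm

include habel hsymm hnd hEn ha hφ in
lemma low_iff_not_low_of_ker_abelian {i j : Fin d} (hij : i ≠ j) (hnij : ¬ E i j) :
    i.val < n ↔ ¬ j.val < n := by
  refine ⟨fun hi hj ↦ hnij (hEn i j hi hj hij), fun hj ↦ ?_⟩
  by_contra hi
  exact hnij (adj_of_high_of_ker_abelian habel hsymm hnd hEn ha hφ hij (not_lt.1 hi) (not_lt.1 hj))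

end Necessity

theorem stmt_0_general {d : ℕ} (E : Fin d → Fin d → Prop)
    (hsymm : ∀ i j, E i j → E j i)
    (n : ℕ) (hnd : n ≤ d)
    (a : Fin d → Fin n → ZMod 2)
    (ha : ∀ (i : Fin d) (h : i.val < n), a i = Pi.single (⟨i.val, h⟩ : Fin n) 1)
    (φ : RACG E →* Multiplicative (Fin n → ZMod 2))
    (hφ : ∀ j : Fin d, φ (racgGen E j) = Multiplicative.ofAdd (a j))
    (hEn : ∀ i j : Fin d, i.val < n → j.val < n → i ≠ j → E i j) :
    (∀ x y : RACG E, x ∈ φ.ker → y ∈ φ.ker → x * y = y * x) ↔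
      ((∀ i j : Fin d, i ≠ j → E i j) ∨
        ((∀ i j : Fin d, i ≠ j → ¬ E i j → (i.val < n ↔ ¬ j.val < n)) ∧
          (∀ j i k : Fin d, i ≠ j → k ≠ j → ¬ E i j → ¬ E k j → i = k) ∧
          (∀ (i j : Fin d) (hi : i.val < n), n ≤ j.val → ¬ E i j →
            a j ⟨i.val, hi⟩ = 1 ∧
              ∀ k : Fin d, n ≤ k.val → k ≠ j → a k ⟨i.val, hi⟩ = 0))) := by
  constructor
  · intro habel
    exact Or.inr ⟨fun i j ↦ low_iff_not_low_of_ker_abelian habel hsymm hnd hEn ha hφ,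
      fun j i k ↦ eq_of_not_adj_of_not_adj_of_ker_abelian habel hsymm,
      fun i j hi hj hnij ↦
        ⟨partner_coord_eq_one_of_ker_abelian habel hsymm hnd hEn ha hφ hi hj hnij,
          fun k hk hkj ↦
            other_coord_eq_zero_of_ker_abelian habel hsymm hnd hEn ha hφ hi hj hnij hk hkj⟩⟩
  · rintro (hcomplete | ⟨hlowHigh, hmatch, hpartner⟩) x y hx hy
    · have hne : ∀ i j : Fin d, ¬ E i j → i ≠ j → False :=
        fun i j hnij hij ↦ hnij (hcomplete i j hij)
      exact ker_abelian_of_matching hsymm (fun j i k hij _ hnij _ ↦ (hne i j hnij hij).elim)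
        hnd hEn ha hφ (fun i j hij hnij ↦ (hne i j hnij hij).elim)
        (fun i j hi hj hnij ↦ (hne i j hnij (Fin.ne_of_val_ne (by omega))).elim) hx hy
    · exact ker_abelian_of_matching hsymm hmatch hnd hEn ha hφ hlowHigh hpartner hx hy

/-- Theorem 1.1/5.1: assuming `E i j` holds for all distinct `i, j ∈ {1,…,n}`,
the kernel of `φ` is abelian if and only if either (i) the graph `E` is complete, or
(ii) every non-adjacent pair contains exactly one element of `{1,…,n}`, every vertex
has at most one non-neighbour, and for every non-adjacent pair `{i, j}` with
`i ≤ n < j` one has `a j i = 1` and `a k i = 0` for all `k` with `n < k ≤ d`,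
`k ≠ j`. -/
theorem stmt_0 {d : ℕ} (hd : 1 ≤ d) (E : Fin d → Fin d → Prop)
    (hsymm : ∀ i j, E i j → E j i) (hirr : ∀ i, ¬ E i i)
    (n : ℕ) (hn : 1 ≤ n) (hnd : n ≤ d)
    (a : Fin d → Fin n → ZMod 2)
    (ha : ∀ (i : Fin d) (h : i.val < n), a i = Pi.single (⟨i.val, h⟩ : Fin n) 1)
    (φ : RACG E →* Multiplicative (Fin n → ZMod 2))
    (hφ : ∀ j : Fin d, φ (racgGen E j) = Multiplicative.ofAdd (a j))
    (hEn : ∀ i j : Fin d, i.val < n → j.val < n → i ≠ j → E i j) :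
    (∀ x y : RACG E, x ∈ φ.ker → y ∈ φ.ker → x * y = y * x) ↔
      ((∀ i j : Fin d, i ≠ j → E i j) ∨
        ((∀ i j : Fin d, i ≠ j → ¬ E i j → (i.val < n ↔ ¬ j.val < n)) ∧
          (∀ j i k : Fin d, i ≠ j → k ≠ j → ¬ E i j → ¬ E k j → i = k) ∧
          (∀ (i j : Fin d) (hi : i.val < n), n ≤ j.val → ¬ E i j →
            a j ⟨i.val, hi⟩ = 1 ∧
              ∀ k : Fin d, n ≤ k.val → k ≠ j → a k ⟨i.val, hi⟩ = 0))) :=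
  stmt_0_general E hsymm n hnd a ha φ hφ hEn
end

section
/- Let W(E) and φ : W(E) → (ZMod 2)^n be as in the context. For t ∈ (ZMod 2)^n, 1 ≤ j ≤ d and 1 ≤ p, q ≤ d, set b^j(t) = (t_i + a_{j,i})_{i=1,…,n} and c^{p,q}(t) = (t_i + a_{p,i} + a_{q,i})_{i=1,…,n}. Then ker φ is isomorphic to the group presented by generators {y_{j,t} : 1 ≤ j ≤ d, t ∈ (ZMod 2)^n} subject to the relators: (R1) for every t ∈ (ZMod 2)^n, the word y_{1,(0,…,0)}^{t_1} · y_{2,(t_1,0,…,0)}^{t_2} ⋯ y_{n,(t_1,…,t_{n−1},0)}^{t_n}, where each exponent t_i ∈ ZMod 2 is interpreted as 0 or 1; (R2) for every 1 ≤ j ≤ d and every t ∈ (ZMod 2)^n, the word y_{j,t} · y_{j,b^j(t)}; (R3) for every t ∈ (ZMod 2)^n and every pair p, q with E p q, the word y_{p,t} · y_{q,b^p(t)} · y_{p,c^{p,q}(t)} · y_{q,b^q(t)}. -/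
/-- The relator (R1) for `t ∈ (ℤ/2)^n`: the word
`y_{1,(0,…,0)}^{t_1} · y_{2,(t_1,0,…,0)}^{t_2} ⋯ y_{n,(t_1,…,t_{n-1},0)}^{t_n}`
in the free group on the generators `y_{j,t}`, indexed by `Fin d × ((ℤ/2)^n)`. -/
def rsWordR1 {d n : ℕ} (hnd : n ≤ d) (t : Fin n → ZMod 2) :
    FreeGroup (Fin d × (Fin n → ZMod 2)) :=
  ((List.finRange n).map fun i =>
    FreeGroup.of
        ((Fin.castLE hnd i, fun k : Fin n => if k.val < i.val then t k else 0) :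
          Fin d × (Fin n → ZMod 2)) ^
      ZMod.val (t i)).prod

/-- The relators (R1), (R2), (R3) of the Reidemeister–Schreier presentation of `ker φ`:
(R1) the words `rsWordR1 t`; (R2) the words `y_{j,t} · y_{j,b^j(t)}` with
`b^j(t) = t + a_j`; (R3) the words `y_{p,t} · y_{q,b^p(t)} · y_{p,c^{p,q}(t)} · y_{q,b^q(t)}`
with `c^{p,q}(t) = t + a_p + a_q`, whenever `E p q`. -/
def rsRels {d n : ℕ} (hnd : n ≤ d) (E : Fin d → Fin d → Prop)
    (a : Fin d → Fin n → ZMod 2) : Set (FreeGroup (Fin d × (Fin n → ZMod 2))) :=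
  {r | (∃ t : Fin n → ZMod 2, r = rsWordR1 hnd t) ∨
    (∃ (j : Fin d) (t : Fin n → ZMod 2),
      r = FreeGroup.of (j, t) * FreeGroup.of (j, fun i => t i + a j i)) ∨
    ∃ (p q : Fin d) (t : Fin n → ZMod 2), E p q ∧
      r = FreeGroup.of (p, t) * FreeGroup.of (q, fun i => t i + a p i) *
          FreeGroup.of (p, fun i => t i + a p i + a q i) *
          FreeGroup.of (q, fun i => t i + a q i)}

/-!
Reidemeister–Schreier through a wreath product. Write `P` for the presented group and
`ρ(t) = s₁^{t₁} ⋯ sₙ^{tₙ}` for the Schreier transversal. Relators (R2) and (R3) make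
`s_j ↦ (x ↦ y_{j,x}, a_j)` a homomorphism `Ψ : W(E) → P ≀ (ℤ/2)ⁿ` lying over `φ`, and
`y_{j,t} ↦ ρ(t) s_j ρ(t + a_j)⁻¹` defines `θ : P → ker φ`, because on the word (R1) it
telescopes to `ρ(0) ρ(t) ρ(t)⁻¹`. Taking the base component of `Ψ` at `1` inverts `θ`.
On generators this holds because `Ψ(ρ(t))` has base component at `1` equal to the word (R1).
On `ker φ` it holds because `θ ∘ Ψ` is the homomorphism
`w ↦ (x ↦ ρ(x) w ρ(φ(w)⁻¹ x)⁻¹, φ(w))`, as both agree on the `s_j`.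
-/

lemma ZMod.eq_zero_or_eq_one (e : ZMod 2) : e = 0 ∨ e = 1 := by
  revert e
  decide

lemma ZModModule.add_add_cancel_left {G : Type*} [AddCommGroup G] [Module (ZMod 2) G] (x y : G) :
    x + (x + y) = y := by
  rw [← add_assoc, ZModModule.add_self, zero_add]

lemma ZModModule.add_add_cancel_right {G : Type*} [AddCommGroup G] [Module (ZMod 2) G]
    (x y : G) : x + y + y = x := by
  rw [add_assoc, ZModModule.add_self, add_zero]

namespace RegularWreathProduct

variable {D D' Q W : Type*} [Group D] [Group D'] [Group Q] [Group W]

def mapLeft (f : D →* D') : D ≀ᵣ Q →* D' ≀ᵣ Q where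
  toFun w := ⟨f ∘ w.left, w.right⟩
  map_one' := by ext <;> simp
  map_mul' _ _ := by ext <;> simp

@[simp] lemma mapLeft_left (f : D →* D') (w : D ≀ᵣ Q) : (mapLeft f w).left = f ∘ w.left :=
  rfl

def ofTransversal (φ : W →* Q) (ρ : Q → W) : W →* W ≀ᵣ Q where
  toFun w := ⟨fun x => ρ x * w * (ρ ((φ w)⁻¹ * x))⁻¹, φ w⟩
  map_one' := by ext <;> simp
  map_mul' w v := by ext <;> simp [mul_assoc]

@[simp] lemma ofTransversal_left (φ : W →* Q) (ρ : Q → W) (w : W) (x : Q) :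
    (ofTransversal φ ρ w).left x = ρ x * w * (ρ ((φ w)⁻¹ * x))⁻¹ := rfl

def presentedGroupEquivKer {α : Type*} {rels : Set (FreeGroup α)}
    (Ψ : W →* PresentedGroup rels ≀ᵣ Q) (θ : PresentedGroup rels →* W) (ρ : Q → W)
    (hρ : ρ 1 = 1) (hΨ : (mapLeft θ).comp Ψ = ofTransversal (rightHom.comp Ψ) ρ)
    (hright : ∀ x, (Ψ (θ (.of x))).right = 1)
    (hleft : ∀ x, (Ψ (θ (.of x))).left 1 = .of x) :
    PresentedGroup rels ≃* (rightHom.comp Ψ).ker := by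
  have hθ : (rightHom.comp Ψ).comp θ = 1 := PresentedGroup.ext hright
  have hright_ker (w : (rightHom.comp Ψ).ker) : (Ψ w).right = 1 := w.2
  let Θ : (rightHom.comp Ψ).ker →* PresentedGroup rels :=
    MonoidHom.mk' (fun w => (Ψ w).left 1) fun w v => by simp [hright_ker]
  have hΘ (w : (rightHom.comp Ψ).ker) : θ (Θ w) = w := by
    simpa [Θ, hright_ker, hρ] using congr_arg (·.left 1) (DFunLike.congr_fun hΨ w.1)
  exact (θ.codRestrict _ fun p => DFunLike.congr_fun hθ p).toMulEquiv Θ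
    (PresentedGroup.ext hleft) (MonoidHom.ext fun w => Subtype.ext (hΘ w))

end RegularWreathProduct

namespace RACG

open RegularWreathProduct Multiplicative

variable {d n : ℕ} (hnd : n ≤ d) (E : Fin d → Fin d → Prop) (a : Fin d → Fin n → ZMod 2)

lemma racgGen_mul_self (j : Fin d) : racgGen E j * racgGen E j = 1 :=
  PresentedGroup.one_of_mem (Or.inl ⟨j, (sq _).symm⟩)

lemma racgGen_mul_mul_mul {p q : Fin d} (hpq : E p q) :
    racgGen E p * racgGen E q * racgGen E p * racgGen E q = 1 :=
  PresentedGroup.one_of_mem (Or.inr ⟨p, q, hpq, by simp [sq, mul_assoc]⟩)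

lemma of_mul_of_add (j : Fin d) (t : Fin n → ZMod 2) :
    (PresentedGroup.of (j, t) : PresentedGroup (rsRels hnd E a)) * .of (j, t + a j) = 1 :=
  PresentedGroup.one_of_mem (Or.inr (Or.inl ⟨j, t, rfl⟩))

lemma of_mul_of_mul_of_mul {p q : Fin d} (hpq : E p q) (t : Fin n → ZMod 2) :
    (PresentedGroup.of (p, t) : PresentedGroup (rsRels hnd E a)) * .of (q, t + a p) *
      .of (p, t + a p + a q) * .of (q, t + a q) = 1 :=
  PresentedGroup.one_of_mem (Or.inr (Or.inr ⟨p, q, t, hpq, rfl⟩))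

def toWreath :
    RACG E →* PresentedGroup (rsRels hnd E a) ≀ᵣ Multiplicative (Fin n → ZMod 2) :=
  PresentedGroup.toGroup (f := fun j => ⟨fun x => .of (j, toAdd x), ofAdd (a j)⟩) <| by
    rintro r (⟨j, rfl⟩ | ⟨p, q, hpq, rfl⟩) <;> ext1
    · funext x
      simpa [sq, ZModModule.neg_eq_self, add_comm] using of_mul_of_add hnd E a j (toAdd x)
    · simp [sq, ← ofAdd_add, ZModModule.add_self]
    · funext x
      simpa [sq, ZModModule.neg_eq_self, ZModModule.add_add_cancel_left, add_comm, add_left_comm,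
        mul_assoc] using of_mul_of_mul_of_mul hnd E a hpq (toAdd x)
    · simp [sq, ← ofAdd_add, ZModModule.add_self]

@[simp] lemma toWreath_racgGen (j : Fin d) :
    toWreath hnd E a (racgGen E j) = ⟨fun x => .of (j, toAdd x), ofAdd (a j)⟩ :=
  PresentedGroup.toGroup.of _

lemma toWreath_racgGen_pow (j : Fin d) (e : ZMod 2) :
    toWreath hnd E a (racgGen E j ^ e.val) =
      ⟨fun x => .of (j, toAdd x) ^ e.val, ofAdd (e • a j)⟩ := by
  obtain rfl | rfl := ZMod.eq_zero_or_eq_one e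
  · ext1 <;> simp [Pi.one_def]
  · simp [ZMod.val_one]

def transversalFactor (t : Fin n → ZMod 2) (i : Fin n) : RACG E :=
  racgGen E (Fin.castLE hnd i) ^ (t i).val

def transversal (t : Fin n → ZMod 2) : RACG E :=
  (List.ofFn (transversalFactor hnd E t)).prod

lemma transversal_zero : transversal hnd E 0 = 1 :=
  List.prod_eq_one (by simp [transversalFactor])

lemma transversal_eq_partialProd (t : Fin n → ZMod 2) :
    transversal hnd E t = Fin.partialProd (transversalFactor hnd E t) (Fin.last n) := by
  rw [Fin.partialProd, Fin.val_last, List.take_of_length_le (by simp), transversal]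

def schreierGen (x : Fin d × (Fin n → ZMod 2)) : RACG E :=
  transversal hnd E x.2 * racgGen E x.1 * (transversal hnd E (x.2 + a x.1))⁻¹

lemma lift_schreierGen_of_pow (j : Fin d) (x : Fin n → ZMod 2) (e : ZMod 2) :
    FreeGroup.lift (schreierGen hnd E a) (.of (j, x) ^ e.val) =
      transversal hnd E x * racgGen E j ^ e.val * (transversal hnd E (x + e • a j))⁻¹ := by
  obtain rfl | rfl := ZMod.eq_zero_or_eq_one e
  · simp
  · simp [ZMod.val_one, schreierGen]

lemma schreierGen_mul_schreierGen (j : Fin d) (t : Fin n → ZMod 2) :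
    schreierGen hnd E a (j, t) * schreierGen hnd E a (j, t + a j) = 1 := by
  simp only [schreierGen, ZModModule.add_add_cancel_right]
  calc transversal hnd E t * racgGen E j * (transversal hnd E (t + a j))⁻¹ *
        (transversal hnd E (t + a j) * racgGen E j * (transversal hnd E t)⁻¹)
      = transversal hnd E t * (racgGen E j * racgGen E j) * (transversal hnd E t)⁻¹ := by group
    _ = 1 := by rw [racgGen_mul_self]; group

lemma schreierGen_mul_mul_mul {p q : Fin d} (hpq : E p q) (t : Fin n → ZMod 2) :
    schreierGen hnd E a (p, t) * schreierGen hnd E a (q, t + a p) *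
      schreierGen hnd E a (p, t + a p + a q) * schreierGen hnd E a (q, t + a q) = 1 := by
  have h : t + a p + a q + a p = t + a q := by
    rw [add_right_comm, ZModModule.add_add_cancel_right]
  simp only [schreierGen, h, ZModModule.add_add_cancel_right]
  calc _ = transversal hnd E t *
        (racgGen E p * racgGen E q * racgGen E p * racgGen E q) * (transversal hnd E t)⁻¹ := by
        group
    _ = 1 := by rw [racgGen_mul_mul_mul E hpq]; group

def truncate (t : Fin n → ZMod 2) (m : ℕ) : Fin n → ZMod 2 :=
  fun k => if k.val < m then t k else 0

lemma truncate_zero (t : Fin n → ZMod 2) : truncate t 0 = 0 := by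
  funext k
  simp [truncate]

lemma truncate_of_le (t : Fin n → ZMod 2) {m : ℕ} (hm : n ≤ m) : truncate t m = t := by
  funext k
  simp [truncate, k.isLt.trans_le hm]

lemma truncate_succ (t : Fin n → ZMod 2) (i : Fin n) :
    truncate t (i + 1) = truncate t i + t i • Pi.single i 1 := by
  funext k
  rcases lt_trichotomy k i with h | rfl | h
  · have hk : (k : ℕ) < i := h
    simp [truncate, h.ne, hk, hk.trans (Nat.lt_succ_self _)]
  · simp [truncate]
  · have hk : (i : ℕ) + 1 ≤ k := h
    simp [truncate, h.ne', Nat.not_lt.2 hk, Nat.not_lt.2 (Nat.le_of_succ_le hk)]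

def rsWordR1Factor (t : Fin n → ZMod 2) (i : Fin n) : FreeGroup (Fin d × (Fin n → ZMod 2)) :=
  .of (Fin.castLE hnd i, truncate t i) ^ (t i).val

lemma rsWordR1_eq_partialProd (t : Fin n → ZMod 2) :
    rsWordR1 hnd t = Fin.partialProd (rsWordR1Factor hnd t) (Fin.last n) := by
  rw [Fin.partialProd, Fin.val_last, List.take_of_length_le (by simp), List.ofFn_eq_map]
  rfl

section

variable {a} (ha : ∀ (i : Fin d) (h : i.val < n), a i = Pi.single (⟨i.val, h⟩ : Fin n) 1)
include ha

lemma lift_schreierGen_partialProd (t : Fin n → ZMod 2) (i : Fin (n + 1)) :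
    FreeGroup.lift (schreierGen hnd E a) (Fin.partialProd (rsWordR1Factor hnd t) i) *
        transversal hnd E (truncate t i) = Fin.partialProd (transversalFactor hnd E t) i := by
  induction i using Fin.induction with
  | zero => simp [truncate_zero, transversal_zero]
  | succ i ih =>
    have hai : a (Fin.castLE hnd i) = Pi.single i 1 := ha _ i.isLt
    rw [Fin.partialProd_succ, Fin.partialProd_succ, map_mul, rsWordR1Factor,
      lift_schreierGen_of_pow, Fin.val_succ, truncate_succ, ← hai, ← ih, Fin.val_castSucc,
      transversalFactor]
    group

lemma toWreath_partialProd (t : Fin n → ZMod 2) (i : Fin (n + 1)) :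
    (toWreath hnd E a (Fin.partialProd (transversalFactor hnd E t) i)).right =
        ofAdd (truncate t i) ∧
      (toWreath hnd E a (Fin.partialProd (transversalFactor hnd E t) i)).left 1 =
        PresentedGroup.mk _ (Fin.partialProd (rsWordR1Factor hnd t) i) := by
  induction i using Fin.induction with
  | zero => simp [truncate_zero]
  | succ i ih =>
    have hai : a (Fin.castLE hnd i) = Pi.single i 1 := ha _ i.isLt
    rw [Fin.val_castSucc] at ih
    rw [Fin.partialProd_succ, Fin.partialProd_succ, map_mul, transversalFactor,
      toWreath_racgGen_pow, mul_left, mul_right, ih.1, Pi.mul_apply, ih.2]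
    constructor
    · rw [Fin.val_succ, truncate_succ, hai, ofAdd_add]
    · simp [rsWordR1Factor, ZModModule.neg_eq_self]
      rfl

lemma lift_schreierGen_rsWordR1 (t : Fin n → ZMod 2) :
    FreeGroup.lift (schreierGen hnd E a) (rsWordR1 hnd t) = 1 := by
  have h := lift_schreierGen_partialProd hnd E ha t (Fin.last n)
  rwa [← rsWordR1_eq_partialProd, ← transversal_eq_partialProd, Fin.val_last,
    truncate_of_le t le_rfl, mul_eq_right] at h

lemma toWreath_transversal_right (t : Fin n → ZMod 2) :
    (toWreath hnd E a (transversal hnd E t)).right = ofAdd t := by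
  rw [transversal_eq_partialProd, (toWreath_partialProd hnd E ha t (Fin.last n)).1, Fin.val_last,
    truncate_of_le t le_rfl]

lemma toWreath_transversal_left_one (t : Fin n → ZMod 2) :
    (toWreath hnd E a (transversal hnd E t)).left 1 = 1 := by
  rw [transversal_eq_partialProd, (toWreath_partialProd hnd E ha t (Fin.last n)).2,
    ← rsWordR1_eq_partialProd]
  exact PresentedGroup.one_of_mem (Or.inl ⟨t, rfl⟩)

def schreierHom : PresentedGroup (rsRels hnd E a) →* RACG E :=
  PresentedGroup.toGroup (f := schreierGen hnd E a) <| by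
    rintro r (⟨t, rfl⟩ | ⟨j, t, rfl⟩ | ⟨p, q, t, hpq, rfl⟩)
    · exact lift_schreierGen_rsWordR1 hnd E ha t
    · simp only [map_mul, FreeGroup.lift_apply_of]
      exact schreierGen_mul_schreierGen hnd E a j t
    · simp only [map_mul, FreeGroup.lift_apply_of]
      exact schreierGen_mul_mul_mul hnd E a hpq t

@[simp] lemma schreierHom_of (x : Fin d × (Fin n → ZMod 2)) :
    schreierHom hnd E ha (.of x) = schreierGen hnd E a x :=
  PresentedGroup.toGroup.of _

lemma mapLeft_schreierHom_comp_toWreath :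
    (mapLeft (schreierHom hnd E ha)).comp (toWreath hnd E a) =
      ofTransversal (rightHom.comp (toWreath hnd E a)) fun x => transversal hnd E (toAdd x) := by
  refine PresentedGroup.ext fun j => ?_
  change mapLeft _ (toWreath hnd E a (racgGen E j)) = ofTransversal _ _ (racgGen E j)
  ext1
  · funext x
    simp [schreierGen, ZModModule.neg_eq_self, add_comm]
  · rfl

lemma toWreath_schreierHom_of_right (x : Fin d × (Fin n → ZMod 2)) :
    (toWreath hnd E a (schreierHom hnd E ha (.of x))).right = 1 := by
  simp [schreierGen, toWreath_transversal_right hnd E ha, ← ofAdd_add]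

lemma toWreath_schreierHom_of_left_one (x : Fin d × (Fin n → ZMod 2)) :
    (toWreath hnd E a (schreierHom hnd E ha (.of x))).left 1 = .of x := by
  simp [schreierGen, toWreath_transversal_right hnd E ha, toWreath_transversal_left_one hnd E ha,
    ZModModule.neg_eq_self]

end

end RACG

theorem stmt_3_general {d : ℕ} (E : Fin d → Fin d → Prop)
    (n : ℕ) (hnd : n ≤ d)
    (a : Fin d → Fin n → ZMod 2)
    (ha : ∀ (i : Fin d) (h : i.val < n), a i = Pi.single (⟨i.val, h⟩ : Fin n) 1)
    (φ : RACG E →* Multiplicative (Fin n → ZMod 2))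
    (hφ : ∀ j : Fin d, φ (racgGen E j) = Multiplicative.ofAdd (a j)) :
    Nonempty (PresentedGroup (rsRels hnd E a) ≃* ↥φ.ker) := by
  obtain rfl : φ = RegularWreathProduct.rightHom.comp (RACG.toWreath hnd E a) :=
    PresentedGroup.ext fun j =>
      (hφ j).trans (congr_arg RegularWreathProduct.right (RACG.toWreath_racgGen hnd E a j)).symm
  exact ⟨RegularWreathProduct.presentedGroupEquivKer _ _ _ (RACG.transversal_zero hnd E)
    (RACG.mapLeft_schreierHom_comp_toWreath hnd E ha)
    (RACG.toWreath_schreierHom_of_right hnd E ha)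
    (RACG.toWreath_schreierHom_of_left_one hnd E ha)⟩

/-- Proposition 3.1: `ker φ` is isomorphic to the group presented by the generators
`y_{j,t}` (`1 ≤ j ≤ d`, `t ∈ (ℤ/2)^n`) subject to the relators (R1), (R2), (R3). -/
theorem stmt_3 {d : ℕ} (hd : 1 ≤ d) (E : Fin d → Fin d → Prop)
    (hsymm : ∀ i j, E i j → E j i) (hirr : ∀ i, ¬ E i i)
    (n : ℕ) (hn : 1 ≤ n) (hnd : n ≤ d)
    (a : Fin d → Fin n → ZMod 2)
    (ha : ∀ (i : Fin d) (h : i.val < n), a i = Pi.single (⟨i.val, h⟩ : Fin n) 1)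
    (φ : RACG E →* Multiplicative (Fin n → ZMod 2))
    (hφ : ∀ j : Fin d, φ (racgGen E j) = Multiplicative.ofAdd (a j)) :
    Nonempty (PresentedGroup (rsRels hnd E a) ≃* ↥φ.ker) :=
  stmt_3_general E n hnd a ha φ hφ
end

section
/- Let A, B ⊆ {1,…,d} be subsets with A nonempty and A ≠ B, such that E p q holds for all distinct p, q ∈ A and for all distinct p, q ∈ B. Let w = ∏_{i ∈ A} s_i and w' = ∏_{j ∈ B} s_j (products taken over the elements in increasing order). Then w does not belong to the normal closure of w' in W(E). -/
/-!
Sending each generator `s j` to the `j`-th basis vector of `𝔽₂^d` kills every relator, so it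
defines a homomorphism `W(E) → 𝔽₂^d` (the mod-2 abelianisation), and it maps `∏_{i ∈ S} s i`
to the indicator vector of `S`. The target is abelian of exponent 2, so the normal closure of
`w'` is mapped into `{0, 1_B}`; but `w` is mapped to `1_A`, which is neither `0` (as `A` is
nonempty) nor `1_B` (as `A ≠ B`).
-/

open Subgroup

theorem eq_one_or_eq_of_mem_zpowers_of_sq_eq_one {G : Type*} [Group G] {a b : G}
    (hb : b ^ 2 = 1) (ha : a ∈ zpowers b) : a = 1 ∨ a = b := by
  obtain ⟨n, rfl⟩ := ha
  obtain ⟨k, rfl | rfl⟩ := Int.even_or_odd' n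
  · left
    simp only [zpow_mul, zpow_ofNat, hb, one_zpow]
  · right
    simp only [zpow_add_one, zpow_mul, zpow_ofNat, hb, one_zpow, one_mul]

theorem MonoidHom.eq_one_or_eq_of_mem_normalClosure_singleton {G H : Type*} [Group G]
    [CommGroup H] (f : G →* H) {a b : G} (hb : f b ^ 2 = 1) (ha : a ∈ normalClosure {b}) :
    f a = 1 ∨ f a = f b := by
  have hle : normalClosure {b} ≤ (zpowers (f b)).comap f :=
    normalClosure_le_normal (by simp)
  exact eq_one_or_eq_of_mem_zpowers_of_sq_eq_one hb (hle ha)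

theorem Finset.sum_pi_single_injective {ι M : Type*} [DecidableEq ι] [AddCommMonoid M]
    {x : M} (hx : x ≠ 0) : Function.Injective fun s : Finset ι => ∑ i ∈ s, Pi.single i x := by
  intro s t hst
  ext i
  have hi := congrFun hst i
  simp only [Finset.sum_apply, Finset.sum_pi_single] at hi
  split_ifs at hi <;> simp_all

theorem Finset.prod_map_sort {ι M : Type*} [LinearOrder ι] [CommMonoid M] (s : Finset ι)
    (f : ι → M) : ((s.sort (· ≤ ·)).map f).prod = ∏ i ∈ s, f i := by
  rw [← Finset.prod_map_toList]
  exact ((s.sort_perm_toList _).map f).prod_eq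

theorem Multiplicative.pi_sq_eq_one_of_charP_two {ι R : Type*} [Ring R] [CharP R 2]
    (g : Multiplicative (ι → R)) : g ^ 2 = 1 := by
  rw [sq]
  funext i
  exact CharTwo.add_self_eq_zero (g.toAdd i)

section RightAngledCoxeter

variable {d : ℕ} (E : Fin d → Fin d → Prop)

def racgParity : RACG E →* Multiplicative (Fin d → ZMod 2) :=
  PresentedGroup.toGroup (f := fun j => Multiplicative.ofAdd (Pi.single j 1)) <| by
    rintro r (⟨j, rfl⟩ | ⟨i, j, -, rfl⟩) <;>
      simp only [map_pow, Multiplicative.pi_sq_eq_one_of_charP_two]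

theorem racgParity_racgGen (j : Fin d) :
    racgParity E (racgGen E j) = Multiplicative.ofAdd (Pi.single j 1) :=
  PresentedGroup.toGroup.of _

theorem racgParity_prod_sort (S : Finset (Fin d)) :
    racgParity E ((S.sort (· ≤ ·)).map (racgGen E)).prod =
      Multiplicative.ofAdd (∑ i ∈ S, Pi.single i 1) := by
  rw [map_list_prod, List.map_map, Finset.prod_map_sort, ofAdd_sum]
  exact Finset.prod_congr rfl fun j _ => racgParity_racgGen E j

end RightAngledCoxeter

theorem stmt_6_general {d : ℕ} (E : Fin d → Fin d → Prop)
    (A B : Finset (Fin d)) (hA : A.Nonempty) (hAB : A ≠ B) :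
    ((A.sort (· ≤ ·)).map (racgGen E)).prod ∉
      Subgroup.normalClosure {((B.sort (· ≤ ·)).map (racgGen E)).prod} := by
  intro hmem
  have hinj := Finset.sum_pi_single_injective (ι := Fin d) (one_ne_zero' (ZMod 2))
  rcases (racgParity E).eq_one_or_eq_of_mem_normalClosure_singleton
      (Multiplicative.pi_sq_eq_one_of_charP_two _) hmem with h | h
  · rw [racgParity_prod_sort, ← ofAdd_zero, ← Finset.sum_empty] at h
    exact hA.ne_empty (hinj (Multiplicative.ofAdd.injective h))
  · rw [racgParity_prod_sort, racgParity_prod_sort] at h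
    exact hAB (hinj (Multiplicative.ofAdd.injective h))

/-- Lemma 4.3: if `A, B ⊆ {1,…,d}` are cliques of `E`, `A` is nonempty and `A ≠ B`,
then the product `w = ∏_{i ∈ A} s i` (in increasing order) does not belong to the normal
closure in `W(E)` of the product `w' = ∏_{j ∈ B} s j`. -/
theorem stmt_6 {d : ℕ} (hd : 1 ≤ d) (E : Fin d → Fin d → Prop)
    (hsymm : ∀ i j, E i j → E j i) (hirr : ∀ i, ¬ E i i)
    (A B : Finset (Fin d)) (hA : A.Nonempty) (hAB : A ≠ B)
    (hAclique : ∀ p ∈ A, ∀ q ∈ A, p ≠ q → E p q)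
    (hBclique : ∀ p ∈ B, ∀ q ∈ B, p ≠ q → E p q) :
    ((A.sort (· ≤ ·)).map (racgGen E)).prod ∉
      Subgroup.normalClosure {((B.sort (· ≤ ·)).map (racgGen E)).prod} :=
  stmt_6_general E A B hA hAB
end

section
/- Let n ≥ 1 and 0 ≤ k ≤ n, and let S be the submonoid of the additive group ℤ^n consisting of all u with u_i ≥ 0 for every 1 ≤ i ≤ k. Let U₊ be the set of functions f : S → ℝ satisfying f(0) = 1, f(u + u') = f(u) · f(u') for all u, u' ∈ S, and f(u) ≥ 0 for all u ∈ S, equipped with the topology of pointwise convergence (the subspace topology from the product space ∏_{u ∈ S} ℝ). Then U₊ is a contractible topological space. -/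
/-- The semigroup `S = σ^∨ ∩ M` of the smooth cone `σ = ⟨e_1,…,e_k⟩`:
lattice points of `ℤ^n` whose first `k` coordinates are nonnegative. -/
def dualPoints (n k : ℕ) : Set (Fin n → ℤ) :=
  {u : Fin n → ℤ | ∀ i : Fin n, i.val < k → 0 ≤ u i}

/-- The nonnegative part `U₊ = Hom_sg(S, ℝ₊)` of the affine chart: functions
`f : S → ℝ` with `f 0 = 1`, `f (u + u') = f u * f u'` and `f u ≥ 0`, topologized as
a subspace of the product space `∏_{u ∈ S} ℝ` (pointwise convergence). -/
def nonnegChart (n k : ℕ) : Set (↥(dualPoints n k) → ℝ) :=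
  {f | f ⟨0, fun _ _ => le_refl 0⟩ = 1 ∧
    (∀ u u' : ↥(dualPoints n k),
      f ⟨u.1 + u'.1, fun i hi => add_nonneg (u.2 i hi) (u'.2 i hi)⟩ = f u * f u') ∧
    ∀ u : ↥(dualPoints n k), 0 ≤ f u}

namespace ToricAux

variable {n k : ℕ}

/-- Total degree along the first `k` coordinates. -/
def mdeg (n k : ℕ) (u : ↥(dualPoints n k)) : ℕ :=
  ∑ i ∈ Finset.univ.filter (fun i : Fin n => i.val < k), (u.1 i).toNat

lemma mdeg_zero : mdeg n k ⟨0, fun _ _ => le_refl 0⟩ = 0 := by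
  unfold mdeg
  apply Finset.sum_eq_zero
  intro i _
  simp

lemma mdeg_add (u u' : ↥(dualPoints n k)) :
    mdeg n k ⟨u.1 + u'.1, fun i hi => add_nonneg (u.2 i hi) (u'.2 i hi)⟩
      = mdeg n k u + mdeg n k u' := by
  unfold mdeg
  rw [← Finset.sum_add_distrib]
  apply Finset.sum_congr rfl
  intro i hi
  simp only [Finset.mem_filter] at hi
  simp only [Pi.add_apply]
  have h1 := u.2 i hi.2
  have h2 := u'.2 i hi.2
  omega

lemma pos_of_mdeg_eq_zero {f : ↥(dualPoints n k) → ℝ} (hf : f ∈ nonnegChart n k)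
    (u : ↥(dualPoints n k)) (hu : mdeg n k u = 0) : 0 < f u := by
  have hzero : ∀ i : Fin n, i.val < k → u.1 i = 0 := by
    intro i hi
    have h1 : (u.1 i).toNat = 0 := by
      have := (Finset.sum_eq_zero_iff).mp hu i (by simp [hi])
      exact this
    have h2 := u.2 i hi
    omega
  set v : ↥(dualPoints n k) :=
    ⟨-u.1, fun i hi => by rw [Pi.neg_apply, hzero i hi]; exact le_refl 0⟩ with hv
  have hm := hf.2.1 u v
  have heq : (⟨u.1 + v.1, fun i hi => add_nonneg (u.2 i hi) (v.2 i hi)⟩ :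
      ↥(dualPoints n k)) = ⟨0, fun _ _ => le_refl 0⟩ := by
    apply Subtype.ext
    simp [hv]
  rw [heq, hf.1] at hm
  rcases (hf.2.2 u).eq_or_lt with h0 | h0
  · exfalso
    rw [← h0] at hm
    simp at hm
  · exact h0

/-- The auxiliary two-variable function `(t, x) ↦ x ^ t * t ^ m` is continuous on the
relevant region. -/
lemma cont_aux (m : ℕ) :
    ContinuousOn (fun p : ℝ × ℝ => p.2 ^ p.1 * p.1 ^ m)
      {p : ℝ × ℝ | 0 ≤ p.1 ∧ p.1 ≤ 1 ∧ 0 ≤ p.2 ∧ (p.2 = 0 → 0 < m)} := by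
  intro p hp
  obtain ⟨ht0, ht1, hx0, hcond⟩ := hp
  by_cases hok : p.2 ≠ 0 ∨ 0 < p.1
  · apply ContinuousAt.continuousWithinAt
    apply ContinuousAt.mul
    · exact ContinuousAt.rpow continuousAt_snd continuousAt_fst hok
    · exact (continuous_fst.pow m).continuousAt
  · push_neg at hok
    obtain ⟨hx, ht⟩ := hok
    have ht' : p.1 = 0 := le_antisymm ht ht0
    have hm : 0 < m := hcond hx
    -- value at the point is 0
    have hval : p.2 ^ p.1 * p.1 ^ m = 0 := by
      rw [ht', zero_pow (by omega)]
      ring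
    unfold ContinuousWithinAt
    simp only [hval]
    apply tendsto_of_tendsto_of_tendsto_of_le_of_le'
      (g := fun _ : ℝ × ℝ => (0:ℝ)) (h := fun q : ℝ × ℝ => q.1 ^ m)
    · exact tendsto_const_nhds
    · have : Filter.Tendsto (fun q : ℝ × ℝ => q.1 ^ m) (nhds p) (nhds (p.1 ^ m)) :=
        (continuous_fst.pow m).tendsto p
      have h0 : p.1 ^ m = 0 := by rw [ht', zero_pow (by omega)]
      rw [h0] at this
      exact this.mono_left nhdsWithin_le_nhds
    · filter_upwards [self_mem_nhdsWithin] with q hq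
      exact mul_nonneg (Real.rpow_nonneg hq.2.2.1 _) (pow_nonneg hq.1 _)
    · have hnear : {q : ℝ × ℝ | q.2 < 1} ∈ nhdsWithin p
        {p : ℝ × ℝ | 0 ≤ p.1 ∧ p.1 ≤ 1 ∧ 0 ≤ p.2 ∧ (p.2 = 0 → 0 < m)} := by
        apply nhdsWithin_le_nhds
        have : Continuous (fun q : ℝ × ℝ => q.2) := continuous_snd
        apply this.isOpen_preimage {y : ℝ | y < 1} isOpen_Iio |>.mem_nhds
        simp [hx]
      filter_upwards [self_mem_nhdsWithin, hnear] with q hq hq1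
      calc q.2 ^ q.1 * q.1 ^ m ≤ 1 * q.1 ^ m := by
            apply mul_le_mul_of_nonneg_right _ (pow_nonneg hq.1 _)
            exact Real.rpow_le_one hq.2.2.1 (le_of_lt hq1) hq.1
        _ = q.1 ^ m := one_mul _

/-- The basepoint: the distinguished point of the chart. -/
lemma basept_mem (n k : ℕ) :
    (fun u : ↥(dualPoints n k) => (0:ℝ) ^ (mdeg n k u)) ∈ nonnegChart n k := by
  refine ⟨?_, ?_, ?_⟩
  · simp only [mdeg_zero, pow_zero]
  · intro u u'
    simp only [mdeg_add, pow_add]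
  · intro u
    exact pow_nonneg le_rfl _

end ToricAux

open ToricAux

/-- Lemma 2.2 (chart by chart): the nonnegative part `U₊ = Hom_sg(σ^∨ ∩ M, ℝ₊)` of the
affine chart of a smooth cone of dimension `k` in `ℤ^n` is contractible. -/
theorem stmt_12 (n k : ℕ) (hn : 1 ≤ n) (hk : k ≤ n) :
    ContractibleSpace ↥(nonnegChart n k) := by
  set x0 : ↥(nonnegChart n k) := ⟨_, basept_mem n k⟩ with hx0
  rw [contractible_iff_id_nullhomotopic]
  refine ⟨x0, ⟨?_⟩⟩
  -- homotopy from id to const x0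
  refine
    { toFun := fun p =>
        ⟨fun u => ((p.2 : ↥(dualPoints n k) → ℝ) u) ^ (1 - (p.1 : ℝ)) *
            (1 - (p.1 : ℝ)) ^ mdeg n k u, ?_⟩
      continuous_toFun := ?_
      map_zero_left := ?_
      map_one_left := ?_ }
  case refine_1 =>
    obtain ⟨t, f⟩ := p
    obtain ⟨f, hf⟩ := f
    refine ⟨?_, ?_, ?_⟩
    · simp only [hf.1, mdeg_zero, Real.one_rpow, pow_zero, one_mul]
    · intro u u'
      simp only [hf.2.1 u u', mdeg_add, pow_add,
        Real.mul_rpow (hf.2.2 u) (hf.2.2 u')]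
      ring
    · intro u
      exact mul_nonneg (Real.rpow_nonneg (hf.2.2 u) _)
        (pow_nonneg (by have := t.2.2; linarith) _)
  case refine_2 =>
    apply Continuous.subtype_mk
    apply continuous_pi
    intro u
    have hφ : Continuous (fun p : unitInterval × ↥(nonnegChart n k) =>
        ((1 - (p.1 : ℝ), (p.2 : ↥(dualPoints n k) → ℝ) u) : ℝ × ℝ)) := by
      apply Continuous.prodMk
      · exact continuous_const.sub (continuous_subtype_val.comp continuous_fst)
      · exact (continuous_apply u).comp (continuous_subtype_val.comp continuous_snd)
    apply ContinuousOn.comp_continuous (cont_aux (mdeg n k u)) hφ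
    intro p
    refine ⟨by have := p.1.2.2; simp only; linarith,
      by have := p.1.2.1; simp only; linarith, p.2.2.2.2 u, ?_⟩
    intro hfu
    rcases Nat.eq_zero_or_pos (mdeg n k u) with h0 | h0
    · exfalso
      have := pos_of_mdeg_eq_zero p.2.2 u h0
      simp only at hfu
      rw [hfu] at this
      exact lt_irrefl _ this
    · exact h0
  case refine_3 =>
    intro f
    apply Subtype.ext
    funext u
    simp [Real.rpow_one]
  case refine_4 =>
    intro f
    apply Subtype.ext
    funext u
    simp [hx0, Real.rpow_zero]
end
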